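/- arXiv:1605.05181 — 5 statements merged into one kernel-verified Lean document; each statement's English description precedes it below -/
import Mathlib

section
/- Let F(t) = Σ_{n≥0} α_n t^n and R(t) = Σ_{n≥1} (R_n/n) t^n be formal power series with α_0 = 1 and R_1 = 0, and define the polynomial sequence {P_n} by F(xt − R(t)) = Σ_{n≥0} α_n P_n(x) t^n. Then for every n ≥ 1, the identity α_n x P_n'(x) − Σ_{k=1}^{n} R_{k+1} α_{n−k} P'_{n−k}(x) = n α_n P_n(x) holds. -/
/-!
Write `G = x t - R(t)` and `W = F(G)`. The operators `t ∂/∂t` and `(x - R'(t)) ∂/∂x` are both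
derivations of `ℂ[x]⟦t⟧` and they agree on `G`, since `∂G/∂x = t`; hence they agree on every
polynomial in `G`, in particular on `W`. Comparing coefficients of `t^n` gives the identity, and
only the powers `G^m` with `m ≤ n` matter because `G` has no constant term.
-/

/-- The power series `x*t - R(t)` (in `t`, coefficients in `Polynomial ℂ`),
where `R(t) = ∑_{n≥1} (R n / n) t^n`. -/
noncomputable def genSeries (R : ℕ → ℂ) : PowerSeries (Polynomial ℂ) :=
  PowerSeries.mk fun j =>
    if j = 0 then 0
    else if j = 1 then Polynomial.X - Polynomial.C (R 1)
    else -Polynomial.C (R j / (j : ℂ))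

open scoped Polynomial

theorem Derivation.map_sum_smul_pow_eq_mul {R A : Type*} [CommSemiring R] [CommSemiring A]
    [Algebra R A] {D₁ D₂ : Derivation R A A} {g c : A} (h : D₁ g = c * D₂ g)
    (s : Finset ℕ) (a : ℕ → R) :
    D₁ (∑ m ∈ s, a m • g ^ m) = c * D₂ (∑ m ∈ s, a m • g ^ m) := by
  simp only [map_sum, map_smul, leibniz_pow, h, Finset.mul_sum, smul_eq_mul, mul_smul_comm]
  ring_nf

namespace PowerSeries

section PolyDerivative

variable {S : Type*} [CommRing S]

noncomputable def polyDerivative : Derivation S S[X]⟦X⟧ S[X]⟦X⟧ :=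
  Derivation.mk'
    { toFun := fun φ => mk fun n => Polynomial.derivative (coeff n φ)
      map_add' := fun φ ψ => by ext n; simp
      map_smul' := fun c φ => by ext n; simp }
    fun φ ψ => by
      ext n
      rw [smul_eq_mul, smul_eq_mul, mul_comm ψ]
      simp [coeff_mul, Finset.sum_add_distrib, add_comm]

@[simp]
theorem coeff_polyDerivative (φ : S[X]⟦X⟧) (n : ℕ) :
    coeff n (polyDerivative φ) = Polynomial.derivative (coeff n φ) := by
  simp [polyDerivative]

end PolyDerivative

section EulerDerivative

variable (S : Type*) {T : Type*} [CommSemiring S] [CommSemiring T] [Algebra S T]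

noncomputable def eulerDerivative : Derivation S T⟦X⟧ T⟦X⟧ :=
  (X : T⟦X⟧) • (derivative T).restrictScalars S

theorem coeff_eulerDerivative (φ : T⟦X⟧) (n : ℕ) :
    coeff n (eulerDerivative S φ) = n * coeff n φ := by
  rcases n with _ | n
  · simp [eulerDerivative]
  · simp [eulerDerivative, coeff_succ_X_mul, coeff_derivative, mul_comm]

end EulerDerivative

end PowerSeries

open PowerSeries

/-- The series `x - R'(t)`, where `R'(t) = ∑_{k ≥ 0} R_{k+1} t^k`. -/
noncomputable def eulerMultiplier (R : ℕ → ℂ) : ℂ[X]⟦X⟧ :=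
  PowerSeries.C Polynomial.X - PowerSeries.mk fun k => Polynomial.C (R (k + 1))

theorem polyDerivative_genSeries (R : ℕ → ℂ) : polyDerivative (genSeries R) = X := by
  ext n
  rcases n with _ | _ | n <;> simp [genSeries, coeff_X]

theorem eulerDerivative_genSeries (R : ℕ → ℂ) :
    eulerDerivative ℂ (genSeries R) = eulerMultiplier R * polyDerivative (genSeries R) := by
  rw [polyDerivative_genSeries]
  ext n : 1
  rcases n with _ | _ | n
  · simp [coeff_eulerDerivative, genSeries]
  · simp [coeff_eulerDerivative, genSeries, eulerMultiplier]
  · have hn : ((n + 1 + 1 : ℕ) : ℂ) ≠ 0 := Nat.cast_ne_zero.mpr (by omega)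
    simp only [coeff_eulerDerivative, coeff_succ_mul_X, eulerMultiplier, genSeries, map_sub,
      coeff_succ_C, coeff_mk, zero_sub]
    rw [if_neg (by omega), if_neg (by omega), mul_neg, ← Polynomial.C_eq_natCast,
      ← Polynomial.C_mul, mul_div_cancel₀ _ hn]

theorem coeff_eulerMultiplier_mul {R : ℕ → ℂ} (hR1 : R 1 = 0) (φ : ℂ[X]⟦X⟧) (n : ℕ) :
    coeff n (eulerMultiplier R * φ) = Polynomial.X * coeff n φ -
      ∑ k ∈ Finset.Icc 1 n, Polynomial.C (R (k + 1)) * coeff (n - k) φ := by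
  rw [eulerMultiplier, sub_mul, map_sub, coeff_C_mul, coeff_mul,
    Finset.Nat.sum_antidiagonal_eq_sum_range_succ (fun i j => coeff i (mk _) * coeff j φ),
    Finset.sum_range_eq_add_Ico _ (Nat.zero_lt_succ n), Nat.succ_eq_add_one,
    Finset.Ico_add_one_right_eq_Icc]
  simp [hR1]

theorem coeff_genSeries_pow_of_lt (R : ℕ → ℂ) {j m : ℕ} (h : j < m) :
    coeff j (genSeries R ^ m) = 0 := by
  apply coeff_of_lt_order
  refine lt_of_lt_of_le (by exact_mod_cast h) (le_order_pow_of_constantCoeff_eq_zero m ?_)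
  simp [genSeries, ← coeff_zero_eq_constantCoeff_apply]

theorem coeff_sum_smul_genSeries_pow {α R : ℕ → ℂ} {P : ℕ → ℂ[X]}
    (hgen : ∀ n : ℕ, Polynomial.C (α n) * P n =
      ∑ m ∈ Finset.range (n + 1), Polynomial.C (α m) * coeff n (genSeries R ^ m))
    {n j : ℕ} (hj : j ≤ n) :
    coeff j (∑ m ∈ Finset.range (n + 1), α m • genSeries R ^ m) = Polynomial.C (α j) * P j := by
  rw [hgen j, map_sum]
  simp only [coeff_smul, Polynomial.smul_eq_C_mul]
  refine (Finset.sum_subset (Finset.range_subset_range.mpr (by omega)) fun m hm hmj => ?_).symm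
  rw [Finset.mem_range] at hm hmj
  rw [coeff_genSeries_pow_of_lt R (by omega), mul_zero]

theorem stmt0_general (α R : ℕ → ℂ) (P : ℕ → Polynomial ℂ)
    (hR1 : R 1 = 0)
    (hgen : ∀ n : ℕ, Polynomial.C (α n) * P n =
      ∑ m ∈ Finset.range (n + 1),
        Polynomial.C (α m) * PowerSeries.coeff n ((genSeries R) ^ m)) :
    ∀ n : ℕ, 1 ≤ n →
      Polynomial.C (α n) * Polynomial.X * Polynomial.derivative (P n)
        - ∑ k ∈ Finset.Icc 1 n,
            Polynomial.C (R (k + 1) * α (n - k)) * Polynomial.derivative (P (n - k))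
      = Polynomial.C ((n : ℂ) * α n) * P n := by
  intro n _
  set W := ∑ m ∈ Finset.range (n + 1), α m • genSeries R ^ m
  have hW : ∀ j ≤ n, coeff j W = Polynomial.C (α j) * P j :=
    fun j hj => coeff_sum_smul_genSeries_pow hgen hj
  calc Polynomial.C (α n) * Polynomial.X * Polynomial.derivative (P n)
        - ∑ k ∈ Finset.Icc 1 n,
            Polynomial.C (R (k + 1) * α (n - k)) * Polynomial.derivative (P (n - k))
      = Polynomial.X * Polynomial.derivative (coeff n W) - ∑ k ∈ Finset.Icc 1 n,
          Polynomial.C (R (k + 1)) * Polynomial.derivative (coeff (n - k) W) := by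
        rw [hW n le_rfl, Polynomial.derivative_C_mul]
        refine congrArg₂ (· - ·) (by ring) (Finset.sum_congr rfl fun k hk => ?_)
        rw [Finset.mem_Icc] at hk
        rw [hW (n - k) (by omega), Polynomial.derivative_C_mul, Polynomial.C_mul, mul_assoc]
    _ = coeff n (eulerMultiplier R * polyDerivative W) := by
        simp only [coeff_eulerMultiplier_mul hR1, coeff_polyDerivative]
    _ = coeff n (eulerDerivative ℂ W) := by
        rw [Derivation.map_sum_smul_pow_eq_mul (eulerDerivative_genSeries R)]
    _ = Polynomial.C ((n : ℂ) * α n) * P n := by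
        rw [coeff_eulerDerivative, hW n le_rfl, Polynomial.C_mul, ← mul_assoc,
          Polynomial.C_eq_natCast]

theorem stmt0 (α R : ℕ → ℂ) (P : ℕ → Polynomial ℂ)
    (hα0 : α 0 = 1) (hR1 : R 1 = 0)
    (hgen : ∀ n : ℕ, Polynomial.C (α n) * P n =
      ∑ m ∈ Finset.range (n + 1),
        Polynomial.C (α m) * PowerSeries.coeff n ((genSeries R) ^ m)) :
    ∀ n : ℕ, 1 ≤ n →
      Polynomial.C (α n) * Polynomial.X * Polynomial.derivative (P n)
        - ∑ k ∈ Finset.Icc 1 n,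
            Polynomial.C (R (k + 1) * α (n - k)) * Polynomial.derivative (P (n - k))
      = Polynomial.C ((n : ℂ) * α n) * P n :=
  stmt0_general α R P hR1 hgen
end

section
/- With F, R, and {P_n} as in the generating relation F(xt − R(t)) = Σ α_n P_n(x) t^n (α_0 = 1, R_1 = 0), if α_1 ≠ 0 and R_2 ≠ 0, then α_n ≠ 0 for all n ≥ 2. -/
open PowerSeries

theorem coeff_coeff_C_X_mul_X_add_map_pow {A : Type*} [CommRing A] (T : PowerSeries A)
    (m n k : ℕ) (hkn : k ≤ n) :
    ((coeff n ((C Polynomial.X * X + map Polynomial.C T) ^ m)).coeff k) =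
      m.choose k * coeff (n - k) (T ^ (m - k)) := by
  have hterm (i : ℕ) : (C Polynomial.X * X) ^ i * map Polynomial.C T ^ (m - i) *
      (m.choose i : PowerSeries (Polynomial A)) =
      X ^ i * (C (Polynomial.X ^ i) * map Polynomial.C (C (m.choose i : A) * T ^ (m - i))) := by
    simp only [map_mul, map_pow, map_natCast, mul_pow]; ring
  have hcoeff (i : ℕ) : (coeff n (X ^ i * (C (Polynomial.X ^ i) *
      map Polynomial.C (C (m.choose i : A) * T ^ (m - i))))).coeff k =
      if i = k then m.choose k * coeff (n - k) (T ^ (m - k)) else 0 := by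
    rw [coeff_X_pow_mul', coeff_C_mul, coeff_map]
    split_ifs with hin hik hik
    · subst hik
      rw [Polynomial.coeff_X_pow_mul', if_pos le_rfl, Nat.sub_self, Polynomial.coeff_C_zero,
        coeff_C_mul]
    · rw [Polynomial.coeff_X_pow_mul']
      split_ifs with hik'
      · rw [Polynomial.coeff_C_of_ne_zero (by omega)]
      · rfl
    · omega
    · rfl
  simp only [add_pow, hterm, map_sum, Polynomial.finsetSum_coeff, hcoeff, Finset.sum_ite_eq',
    Finset.mem_range]
  split_ifs with hkm
  · rfl
  · simp [Nat.choose_eq_zero_of_lt (by omega : m < k)]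

noncomputable def tailSeries (R : ℕ → ℂ) : PowerSeries ℂ :=
  X ^ 2 * mk fun j => -(R (j + 2) / ((j + 2 : ℕ) : ℂ))

theorem genSeries_eq_C_X_mul_X_add_map_tailSeries (R : ℕ → ℂ) (hR1 : R 1 = 0) :
    genSeries R = C Polynomial.X * X + map Polynomial.C (tailSeries R) := by
  ext (_ | _ | j) <;>
    simp [genSeries, tailSeries, coeff_X_pow_mul', coeff_X, hR1, add_assoc, one_add_one_eq_two]

theorem coeff_two_tailSeries_pow (R : ℕ → ℂ) (j : ℕ) :
    coeff 2 (tailSeries R ^ j) = if j = 1 then -(R 2 / 2) else 0 := by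
  rw [tailSeries, mul_pow, ← pow_mul, coeff_X_pow_mul']
  rcases j with _ | _ | j
  · simp [coeff_one]
  · simp
  · simp only [if_neg (by omega : ¬2 * (j + 2) ≤ 2), if_neg (by omega : j + 2 ≠ 1)]

theorem coeff_coeff_genSeries_pow (R : ℕ → ℂ) (hR1 : R 1 = 0) (k m : ℕ) :
    (coeff (k + 2) (genSeries R ^ m)).coeff k =
      if m = k + 1 then -((k + 1) * (R 2 / 2)) else 0 := by
  rw [genSeries_eq_C_X_mul_X_add_map_tailSeries R hR1,
    coeff_coeff_C_X_mul_X_add_map_pow _ _ _ _ (by omega), Nat.add_sub_cancel_left,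
    coeff_two_tailSeries_pow]
  split_ifs with h1 h2 h2
  · subst h2; simp [Nat.choose_succ_self_right]
  · omega
  · omega
  · rw [mul_zero]

theorem eq_zero_of_succ_succ_eq_zero {α R : ℕ → ℂ} {P : ℕ → Polynomial ℂ} (hR1 : R 1 = 0)
    (hgen : ∀ n : ℕ, Polynomial.C (α n) * P n =
      ∑ m ∈ Finset.range (n + 1),
        Polynomial.C (α m) * PowerSeries.coeff n ((genSeries R) ^ m))
    (hR2 : R 2 ≠ 0) {k : ℕ} (hk : α (k + 2) = 0) : α (k + 1) = 0 := by
  have h := congrArg (Polynomial.coeff · k) (hgen (k + 2))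
  simp only [hk, map_zero, zero_mul, Polynomial.coeff_zero, Polynomial.finsetSum_coeff,
    Polynomial.coeff_C_mul, coeff_coeff_genSeries_pow R hR1, mul_ite, mul_zero,
    Finset.sum_ite_eq', Finset.mem_range, if_pos (by omega : k + 1 < k + 2 + 1)] at h
  have hR2' : -((k + 1 : ℂ) * (R 2 / 2)) ≠ 0 := by
    simpa [hR2] using Nat.cast_add_one_ne_zero k
  exact (mul_eq_zero.mp h.symm).resolve_right hR2'

theorem stmt1_general (α R : ℕ → ℂ) (P : ℕ → Polynomial ℂ)
    (hR1 : R 1 = 0)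
    (hgen : ∀ n : ℕ, Polynomial.C (α n) * P n =
      ∑ m ∈ Finset.range (n + 1),
        Polynomial.C (α m) * PowerSeries.coeff n ((genSeries R) ^ m))
    (hα1 : α 1 ≠ 0) (hR2 : R 2 ≠ 0) :
    ∀ n : ℕ, 2 ≤ n → α n ≠ 0 := by
  suffices h : ∀ k, α (k + 1) ≠ 0 from
    fun n hn => Nat.sub_add_cancel (by omega : 1 ≤ n) ▸ h (n - 1)
  intro k
  induction k with
  | zero => exact hα1
  | succ k ih => exact fun hk => ih (eq_zero_of_succ_succ_eq_zero hR1 hgen hR2 hk)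

theorem stmt1 (α R : ℕ → ℂ) (P : ℕ → Polynomial ℂ)
    (hα0 : α 0 = 1) (hR1 : R 1 = 0)
    (hgen : ∀ n : ℕ, Polynomial.C (α n) * P n =
      ∑ m ∈ Finset.range (n + 1),
        Polynomial.C (α m) * PowerSeries.coeff n ((genSeries R) ^ m))
    (hα1 : α 1 ≠ 0) (hR2 : R 2 ≠ 0) :
    ∀ n : ℕ, 2 ≤ n → α n ≠ 0 :=
  stmt1_general α R P hR1 hgen hα1 hR2
end

section
/- Suppose the polynomial set {P_n} generated by F(xt − R(t)) = Σ α_n P_n(x) t^n with α_1 R_2 ≠ 0 is symmetric, i.e. P_n(−x) = (−1)^n P_n(x) for all n ≥ 0. Then all odd coefficients of R vanish beyond the first: R_{2l+1} = 0 for all l ≥ 1. -/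
open Finset

theorem mul_dvd_pow_sub_pow_of_dvd {S : Type*} [CommRing S] {x y a b : S}
    (ha : x ∣ a) (hb : x ∣ b) (hab : y ∣ a - b) {m : ℕ} (hm : m ≠ 1) :
    y * x ∣ a ^ m - b ^ m := by
  rw [← geom_sum₂_mul, mul_comm y]
  refine mul_dvd_mul (Finset.dvd_sum fun i hi => ?_) hab
  rcases Nat.eq_zero_or_pos i with rfl | hi0
  · have : m - 1 - 0 ≠ 0 := by simp at hi; omega
    exact Dvd.dvd.mul_left (dvd_pow hb this) _
  · exact Dvd.dvd.mul_right (dvd_pow ha hi0.ne') _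

namespace PowerSeries

variable {S : Type*} [CommRing S]

theorem coeff_pow_eq_of_coeff_eq {A B : PowerSeries S} (hA : constantCoeff A = 0)
    (hB : constantCoeff B = 0) {j : ℕ} (h : ∀ i < j, coeff i A = coeff i B) {m : ℕ}
    (hm : m ≠ 1) : coeff j (A ^ m) = coeff j (B ^ m) := by
  have hdvd : X ^ (j + 1) ∣ A ^ m - B ^ m := by
    rw [pow_succ]
    refine mul_dvd_pow_sub_pow_of_dvd (X_dvd_iff.2 hA) (X_dvd_iff.2 hB) ?_ hm
    exact X_pow_dvd_iff.2 fun i hi => by rw [map_sub, h i hi, sub_self]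
  rw [← sub_eq_zero, ← map_sub]
  exact X_pow_dvd_iff.1 hdvd j j.lt_succ_self

/-- The `n`-th coefficient of `∑ₘ a m • A ^ m`; when `A` has no constant term only the powers
`m ≤ n` contribute to it. -/
noncomputable def compCoeff (a : ℕ → S) (A : PowerSeries S) (n : ℕ) : S :=
  ∑ m ∈ range (n + 1), a m * coeff n (A ^ m)

theorem compCoeff_sub_compCoeff (a : ℕ → S) {A B : PowerSeries S} (hA : constantCoeff A = 0)
    (hB : constantCoeff B = 0) {j : ℕ} (h : ∀ i < j, coeff i A = coeff i B) :
    compCoeff a A j - compCoeff a B j = a 1 * (coeff j A - coeff j B) := by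
  rw [compCoeff, compCoeff, ← sum_sub_distrib]
  refine (sum_eq_single 1 (fun m _ hm => ?_) fun h1 => ?_).trans <| by
    rw [pow_one, pow_one, mul_sub]
  · rw [coeff_pow_eq_of_coeff_eq hA hB h hm, sub_self]
  · obtain rfl : j = 0 := by simpa using h1
    simp [hA, hB]

theorem compCoeff_injective {a : ℕ → S} (ha : IsLeftRegular (a 1)) {A B : PowerSeries S}
    (hA : constantCoeff A = 0) (hB : constantCoeff B = 0) (h : compCoeff a A = compCoeff a B) :
    A = B := by
  ext j
  induction j using Nat.strong_induction_on with
  | _ j ih =>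
    have hdiff := compCoeff_sub_compCoeff a hA hB ih
    rw [h, sub_self, ← mul_zero (a 1)] at hdiff
    exact sub_eq_zero.1 (ha hdiff).symm

theorem compCoeff_rescale_map (a : ℕ → S) (ψ : S →+* S) (c : S) (A : PowerSeries S) (n : ℕ) :
    compCoeff (ψ ∘ a) (rescale c (map ψ A)) n = c ^ n * ψ (compCoeff a A n) := by
  simp only [compCoeff, map_sum, mul_sum, ← map_pow, coeff_rescale, coeff_map, map_mul,
    Function.comp_apply]
  exact sum_congr rfl fun _ _ => by ring

end PowerSeries

theorem Polynomial.comp_neg_X_eq_C_mul {K : Type*} [CommRing K] [IsDomain K] [Infinite K]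
    {p : Polynomial K} {c : K} (h : ∀ x, p.eval (-x) = c * p.eval x) :
    p.comp (-X) = C c * p :=
  Polynomial.funext fun x => by simp [h]

section genSeries

open PowerSeries

theorem constantCoeff_genSeries (R : ℕ → ℂ) : constantCoeff (genSeries R) = 0 := by
  simp [genSeries]

theorem coeff_genSeries_of_two_le (R : ℕ → ℂ) {j : ℕ} (hj : 2 ≤ j) :
    coeff j (genSeries R) = -Polynomial.C (R j / j) := by
  simp [genSeries, show j ≠ 0 by omega, show j ≠ 1 by omega]

/-- Substituting `(x, t) ↦ (-x, -t)` in `x t - R(t)` replaces `R n` by `(-1)ⁿ R n`. -/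
theorem rescale_neg_one_map_genSeries (R : ℕ → ℂ) :
    rescale (-1) (map (Polynomial.compRingHom (-Polynomial.X)) (genSeries R)) =
      genSeries fun j => (-1) ^ j * R j := by
  refine PowerSeries.ext fun j => ?_
  rcases j with _ | _ | j <;> simp [genSeries, coeff_rescale, coeff_map, mul_div_assoc]
  ring

end genSeries

theorem stmt2_general (α R : ℕ → ℂ) (P : ℕ → Polynomial ℂ)
    (hgen : ∀ n : ℕ, Polynomial.C (α n) * P n =
      ∑ m ∈ Finset.range (n + 1),
        Polynomial.C (α m) * PowerSeries.coeff n ((genSeries R) ^ m))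
    (hα1 : α 1 ≠ 0)
    (hsym : ∀ n : ℕ, ∀ x : ℂ, (P n).eval (-x) = (-1) ^ n * (P n).eval x) :
    ∀ l : ℕ, 1 ≤ l → R (2 * l + 1) = 0 := by
  intro l hl
  set a : ℕ → Polynomial ℂ := fun m => Polynomial.C (α m)
  set ψ := Polynomial.compRingHom (-Polynomial.X : Polynomial ℂ)
  have hψa : ψ ∘ a = a := funext fun m => by simp [ψ, a]
  have hreflect : PowerSeries.compCoeff a (genSeries fun j => (-1) ^ j * R j) =
      PowerSeries.compCoeff a (genSeries R) := by
    funext n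
    have h := PowerSeries.compCoeff_rescale_map a ψ (-1) (genSeries R) n
    rw [hψa, rescale_neg_one_map_genSeries] at h
    rw [h, PowerSeries.compCoeff, ← hgen n, map_mul]
    simp only [ψ, Polynomial.coe_compRingHom_apply, Polynomial.C_comp,
      Polynomial.comp_neg_X_eq_C_mul (hsym n), map_pow, map_neg, map_one]
    have hsq : ((-1 : Polynomial ℂ) ^ n) ^ 2 = 1 := by
      rw [← pow_mul, pow_mul', neg_one_sq, one_pow]
    linear_combination (Polynomial.C (α n) * P n) * hsq
  have ha : IsLeftRegular (a 1) := (IsRegular.of_ne_zero (Polynomial.C_ne_zero.2 hα1)).left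
  have hR := PowerSeries.compCoeff_injective ha (constantCoeff_genSeries _)
    (constantCoeff_genSeries _) hreflect
  have h := congrArg (PowerSeries.coeff (2 * l + 1)) hR
  rw [coeff_genSeries_of_two_le _ (by omega), coeff_genSeries_of_two_le _ (by omega), neg_inj,
    Polynomial.C_inj, Odd.neg_one_pow ⟨l, rfl⟩, neg_one_mul, neg_div, CharZero.neg_eq_self_iff,
    div_eq_zero_iff] at h
  exact h.resolve_right (by exact_mod_cast (by omega : 2 * l + 1 ≠ 0))

theorem stmt2 (α R : ℕ → ℂ) (P : ℕ → Polynomial ℂ)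
    (hα0 : α 0 = 1) (hR1 : R 1 = 0)
    (hgen : ∀ n : ℕ, Polynomial.C (α n) * P n =
      ∑ m ∈ Finset.range (n + 1),
        Polynomial.C (α m) * PowerSeries.coeff n ((genSeries R) ^ m))
    (hα1 : α 1 ≠ 0) (hR2 : R 2 ≠ 0)
    (hsym : ∀ n : ℕ, ∀ x : ℂ, (P n).eval (-x) = (-1) ^ n * (P n).eval x) :
    ∀ l : ℕ, 1 ≤ l → R (2 * l + 1) = 0 :=
  stmt2_general α R P hgen hα1 hsym
end

section
/- Suppose F(xt − R(t)) = Σ_{n≥0} α_n P_n(x) t^n with α_0 = 1, R_1 = R_2 = 0, α_n ≠ 0 for all n ≥ 1, and {P_n} satisfies the monic three-term recursion x P_n = P_{n+1} + β_n P_n + ω_n P_{n−1} with P_{−1} = 0, P_0 = 1. Then R_n = 0 for all n ≥ 1; consequently R(t) = 0 and P_n(x) = x^n for all n. -/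
/-
Write `S = x t - R(t)`. If `R_k = 0` for `1 ≤ k ≤ N`, then `S ≡ x t mod t^(N+1)`, so the
generating relation gives `α_n P_n = α_n xⁿ` and hence `P_n = xⁿ` for `n ≤ N`. At `x = 0` the series
`S` becomes `-R(t) ≡ -(R_(N+1)/(N+1)) t^(N+1) mod t^(N+2)`, whose powers `m ≥ 2` vanish to order
`2(N+1)`; so the constant term of the `t^(N+1)` coefficient gives `α_(N+1) P_(N+1)(0) = -α_1 R_(N+1)/(N+1)`.
For `N ≥ 2` the recursion writes `P_(N+1) = x^(N+1) - β_N x^N - ω_N x^(N-1)`, which vanishes at `0`,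
so `R_(N+1) = 0`; `R_1 = R_2 = 0` start the induction.
-/

namespace PowerSeries

variable {A : Type*} [CommRing A]

theorem coeff_pow_of_X_pow_dvd_sub_C_mul_X {f : A⟦X⟧} {c : A} {N n : ℕ}
    (hf : X ^ N ∣ f - C c * X) (hn : n < N) (m : ℕ) :
    coeff n (f ^ m) = if n = m then c ^ m else 0 := by
  have hdvd : X ^ N ∣ f ^ m - (C c * X) ^ m := hf.trans (sub_dvd_pow_sub_pow _ _ _)
  have hcoeff := X_pow_dvd_iff.mp hdvd n hn
  rw [map_sub, sub_eq_zero] at hcoeff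
  rw [hcoeff, mul_pow, ← map_pow, coeff_C_mul_X_pow]

theorem coeff_pow_of_X_pow_dvd {f : A⟦X⟧} {N : ℕ} (hN : 1 ≤ N) (hf : X ^ N ∣ f) (m : ℕ) :
    coeff N (f ^ m) = if m = 1 then coeff N f else 0 := by
  match m with
  | 0 => simp [coeff_one, Nat.one_le_iff_ne_zero.mp hN]
  | 1 => simp
  | m + 2 =>
    have hdvd : X ^ (N * (m + 2)) ∣ f ^ (m + 2) := by
      rw [pow_mul]; exact pow_dvd_pow_of_dvd hf _
    rw [X_pow_dvd_iff.mp hdvd N (by nlinarith), if_neg (by omega)]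

end PowerSeries

namespace Polynomial

theorem coeff_zero_eq_zero_of_X_mul_X_pow_eq {K : Type*} [CommRing K] {p : K[X]}
    {b w : K} {n : ℕ} (hn : 2 ≤ n) (h : X * X ^ n = p + C b * X ^ n + C w * X ^ (n - 1)) :
    p.coeff 0 = 0 := by
  simpa [coeff_X_pow, show 0 ≠ n by omega, show 0 ≠ n - 1 by omega, eq_comm] using
    congrArg (coeff · 0) h

end Polynomial

open PowerSeries

theorem X_pow_dvd_genSeries_sub_C_X_mul_X {R : ℕ → ℂ} {N : ℕ}
    (hR : ∀ k, 1 ≤ k → k < N → R k = 0) :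
    X ^ N ∣ genSeries R - C Polynomial.X * X := by
  refine X_pow_dvd_iff.mpr fun j hj => ?_
  rcases Nat.lt_trichotomy j 1 with h | rfl | h
  · obtain rfl : j = 0 := by omega
    simp [genSeries]
  · simp [genSeries, hR 1 le_rfl hj]
  · simp [genSeries, coeff_X, hR j (by omega) hj, show j ≠ 0 by omega, show j ≠ 1 by omega]

theorem X_pow_dvd_map_constantCoeff_genSeries {R : ℕ → ℂ} {N : ℕ}
    (hR : ∀ k, 1 ≤ k → k < N → R k = 0) :
    X ^ N ∣ map Polynomial.constantCoeff (genSeries R) := by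
  simpa using map_dvd (map Polynomial.constantCoeff) (X_pow_dvd_genSeries_sub_C_X_mul_X hR)

theorem constantCoeff_sum_C_mul_coeff_genSeries_pow (α : ℕ → ℂ) {R : ℕ → ℂ} {n : ℕ}
    (hn : 1 ≤ n) (hR : ∀ k, 1 ≤ k → k ≤ n → R k = 0) :
    Polynomial.constantCoeff (∑ m ∈ Finset.range (n + 1 + 1),
        Polynomial.C (α m) * coeff (n + 1) (genSeries R ^ m)) =
      -(α 1 * (R (n + 1) / (n + 1 : ℕ))) := by
  have hdvd := X_pow_dvd_map_constantCoeff_genSeries (N := n + 1) fun k hk hkn => hR k hk (by omega)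
  simp only [map_sum, map_mul, ← coeff_map, map_pow,
    coeff_pow_of_X_pow_dvd (Nat.le_add_left 1 n) hdvd, mul_ite, mul_zero,
    Finset.sum_ite_eq', Finset.mem_range]
  simp [genSeries, show n ≠ 0 by omega]

theorem eq_X_pow_of_forall_R_eq_zero {α R : ℕ → ℂ} {P : ℕ → Polynomial ℂ}
    (hα : ∀ n : ℕ, 1 ≤ n → α n ≠ 0)
    (hgen : ∀ n : ℕ, Polynomial.C (α n) * P n =
      ∑ m ∈ Finset.range (n + 1), Polynomial.C (α m) * coeff n (genSeries R ^ m))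
    (hP0 : P 0 = 1) {N : ℕ} (hR : ∀ k, 1 ≤ k → k ≤ N → R k = 0) {n : ℕ} (hn : n ≤ N) :
    P n = Polynomial.X ^ n := by
  obtain rfl | hn0 := Nat.eq_zero_or_pos n
  · simpa using hP0
  have hdvd := X_pow_dvd_genSeries_sub_C_X_mul_X (N := N + 1) fun k hk hkN => hR k hk (by omega)
  refine mul_left_cancel₀ (Polynomial.C_ne_zero.mpr (hα n hn0)) ?_
  simp [hgen, coeff_pow_of_X_pow_dvd_sub_C_mul_X hdvd (Nat.lt_succ_of_le hn), Finset.sum_ite_eq]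

theorem R_succ_eq_zero_of_forall_R_eq_zero {α R β ω : ℕ → ℂ} {P : ℕ → Polynomial ℂ}
    (hα : ∀ n : ℕ, 1 ≤ n → α n ≠ 0)
    (hgen : ∀ n : ℕ, Polynomial.C (α n) * P n =
      ∑ m ∈ Finset.range (n + 1), Polynomial.C (α m) * coeff n (genSeries R ^ m))
    (hP0 : P 0 = 1) {n : ℕ} (hn : 2 ≤ n)
    (hrec : Polynomial.X * P n = P (n + 1) + Polynomial.C (β n) * P n
      + Polynomial.C (ω n) * P (n - 1))
    (hR : ∀ k, 1 ≤ k → k ≤ n → R k = 0) :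
    R (n + 1) = 0 := by
  rw [eq_X_pow_of_forall_R_eq_zero hα hgen hP0 hR le_rfl,
    eq_X_pow_of_forall_R_eq_zero hα hgen hP0 hR (Nat.sub_le n 1)] at hrec
  have hconst := Polynomial.coeff_zero_eq_zero_of_X_mul_X_pow_eq hn hrec
  have h := congrArg Polynomial.constantCoeff (hgen (n + 1))
  rw [constantCoeff_sum_C_mul_coeff_genSeries_pow α (by omega) hR, map_mul,
    Polynomial.constantCoeff_apply (P (n + 1)), hconst, mul_zero, zero_eq_neg] at h
  simpa [hα 1 le_rfl, Nat.cast_add_one_ne_zero] using h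

theorem stmt15_general (α R : ℕ → ℂ) (P : ℕ → Polynomial ℂ) (β ω : ℕ → ℂ)
    (hR1 : R 1 = 0) (hR2 : R 2 = 0)
    (hαn : ∀ n : ℕ, 1 ≤ n → α n ≠ 0)
    (hgen : ∀ n : ℕ, Polynomial.C (α n) * P n =
      ∑ m ∈ Finset.range (n + 1),
        Polynomial.C (α m) * PowerSeries.coeff n ((genSeries R) ^ m))
    (hP0 : P 0 = 1)
    (hrec : ∀ n : ℕ, 1 ≤ n →
      Polynomial.X * P n = P (n + 1) + Polynomial.C (β n) * P n
        + Polynomial.C (ω n) * P (n - 1)) :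
    (∀ n : ℕ, 1 ≤ n → R n = 0) ∧ (∀ n : ℕ, P n = Polynomial.X ^ n) := by
  have hR : ∀ n k, 1 ≤ k → k ≤ n → R k = 0 := by
    intro n
    induction n with
    | zero => intro k hk hk0; omega
    | succ n ih =>
      intro k hk hkn
      obtain hkn | rfl : k ≤ n ∨ k = n + 1 := by omega
      · exact ih k hk hkn
      obtain rfl | rfl | hn : n = 0 ∨ n = 1 ∨ 2 ≤ n := by omega
      · exact hR1
      · exact hR2
      · exact R_succ_eq_zero_of_forall_R_eq_zero hαn hgen hP0 hn (hrec n (by omega)) ih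
  exact ⟨fun n hn => hR n n hn le_rfl,
    fun n => eq_X_pow_of_forall_R_eq_zero hαn hgen hP0 (hR n) le_rfl⟩

theorem stmt15 (α R : ℕ → ℂ) (P : ℕ → Polynomial ℂ) (β ω : ℕ → ℂ)
    (hα0 : α 0 = 1) (hR1 : R 1 = 0) (hR2 : R 2 = 0)
    (hαn : ∀ n : ℕ, 1 ≤ n → α n ≠ 0)
    (hgen : ∀ n : ℕ, Polynomial.C (α n) * P n =
      ∑ m ∈ Finset.range (n + 1),
        Polynomial.C (α m) * PowerSeries.coeff n ((genSeries R) ^ m))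
    (hP0 : P 0 = 1)
    (hrec0 : Polynomial.X * P 0 = P 1 + Polynomial.C (β 0) * P 0)
    (hrec : ∀ n : ℕ, 1 ≤ n →
      Polynomial.X * P n = P (n + 1) + Polynomial.C (β n) * P n
        + Polynomial.C (ω n) * P (n - 1)) :
    (∀ n : ℕ, 1 ≤ n → R n = 0) ∧ (∀ n : ℕ, P n = Polynomial.X ^ n) :=
  stmt15_general α R P β ω hR1 hR2 hαn hgen hP0 hrec
end

section
/- Let T_1 > 0, b ≠ 0 complex, and suppose {a_n} is a sequence of nonzero reals with lim_{k→∞} a_{2k}/(2k) = ∞ and a_{2k+1}(2b/T_1 + (T_1/2)(2k+3)/a_{2k}) = φ(k), where φ(k) = (T_1/2)·2k(2k+3)/(2k+1) − bA_2 + bA_3/(2k+1) + Σ_{l=2}^{k−1} ab/(2l+1) for constants a, A_2, A_3. Then lim_{k→∞} a_{2k+1}/(2k+1) = T_1²/(4b). -/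
/-!
Divide the recursion by `2k+1`: it reads `(a_{2k+1}/(2k+1)) · c_k = φ(k)/(2k+1)`. Since
`a_{2k}/(2k) → ∞`, the coefficient `c_k = 2b/T₁ + (T₁/2)(2k+3)/a_{2k}` tends to `2b/T₁ ≠ 0`.
In `φ(k)/(2k+1)` the main term tends to `T₁/2`, the constant terms are `O(1/k)`, and the
harmonic-type sum `Σ ab/(2l+1)` is `o(k)` by Cesàro, its terms tending to `0`. The ratio of the limits is
`(T₁/2)/(2b/T₁) = T₁²/(4b)`.
-/

open Filter Finset Topology

theorem tendsto_div_two_mul_add_one_nhds_zero {𝕜 : Type*} [RCLike 𝕜] (c : 𝕜) :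
    Tendsto (fun k : ℕ => c / (2 * (k : 𝕜) + 1)) atTop (𝓝 0) := by
  have h2k : Tendsto (fun k : ℕ => 2 * k) atTop atTop :=
    tendsto_id.const_mul_atTop' two_pos
  have := (tendsto_one_div_add_atTop_nhds_zero_nat (𝕜 := 𝕜)).comp h2k
  simpa [Function.comp_def, div_eq_mul_inv] using this.const_mul c

theorem tendsto_sum_div_two_mul_add_one_nhds_zero {𝕜 : Type*} [RCLike 𝕜] {u : ℕ → 𝕜}
    (hu : Tendsto u atTop (𝓝 0)) {s : ℕ → Finset ℕ} (hs : ∀ k, s k ⊆ range k) :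
    Tendsto (fun k : ℕ => (∑ l ∈ s k, u l) / (2 * (k : 𝕜) + 1)) atTop (𝓝 0) := by
  have hces : Tendsto (fun k : ℕ => (k : ℝ)⁻¹ * ∑ l ∈ range k, ‖u l‖) atTop (𝓝 0) := by
    simpa using hu.norm.cesaro
  refine squeeze_zero_norm' ?_ hces
  filter_upwards [eventually_ge_atTop 1] with k hk
  have hk : (0 : ℝ) < k := by exact_mod_cast hk
  have hnorm : ‖2 * (k : 𝕜) + 1‖ = 2 * k + 1 := by
    exact_mod_cast RCLike.norm_natCast (K := 𝕜) (2 * k + 1)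
  rw [norm_div, hnorm, inv_mul_eq_div]
  calc ‖∑ l ∈ s k, u l‖ / (2 * k + 1)
      ≤ (∑ l ∈ range k, ‖u l‖) / (2 * k + 1) := by
        gcongr ?_ / _
        exact (norm_sum_le (s k) u).trans
          (sum_le_sum_of_subset_of_nonneg (hs k) fun _ _ _ => norm_nonneg _)
    _ ≤ (∑ l ∈ range k, ‖u l‖) / k := by
        gcongr
        linarith

theorem tendsto_add_const_div_of_tendsto_div_atTop {x : ℕ → ℝ}
    (hx : Tendsto (fun k : ℕ => x k / (2 * (k : ℝ))) atTop atTop) (c : ℝ) :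
    Tendsto (fun k : ℕ => (2 * (k : ℝ) + c) / x k) atTop (𝓝 0) := by
  have hinv : Tendsto (fun k : ℕ => 2 * (k : ℝ) / x k) atTop (𝓝 0) := by
    simpa [Pi.inv_def] using hx.inv_tendsto_atTop
  have hcorr : Tendsto (fun k : ℕ => 1 + c / (2 * (k : ℝ))) atTop (𝓝 (1 + 0)) := by
    refine tendsto_const_nhds.add ?_
    simpa [div_div] using tendsto_const_div_atTop_nhds_zero_nat (c / 2)
  have := hinv.mul hcorr
  rw [add_zero, mul_one] at this
  refine this.congr' ?_
  filter_upwards [eventually_ge_atTop 1] with k hk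
  have hk : (k : ℝ) ≠ 0 := by positivity
  field_simp

noncomputable def phi (T b a A₂ A₃ : ℂ) (k : ℕ) : ℂ :=
  T / 2 * (2 * (k : ℂ) * (2 * (k : ℂ) + 3)) / (2 * (k : ℂ) + 1)
    - b * A₂ + b * A₃ / (2 * (k : ℂ) + 1)
    + ∑ l ∈ Icc 2 (k - 1), a * b / (2 * (l : ℂ) + 1)

theorem tendsto_phi_div (T b a A₂ A₃ : ℂ) :
    Tendsto (fun k : ℕ => phi T b a A₂ A₃ k / (2 * (k : ℂ) + 1)) atTop (𝓝 (T / 2)) := by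
  -- `2k(2k+3) = (2k+1)² + (2k+1) - 2`, so `φ(k)/(2k+1)` is a polynomial in `e k = 1/(2k+1)`
  -- plus the averaged harmonic-type sum.
  set e : ℕ → ℂ := fun k => 1 / (2 * (k : ℂ) + 1)
  have he : Tendsto e atTop (𝓝 0) := tendsto_div_two_mul_add_one_nhds_zero 1
  have hsum : Tendsto (fun k : ℕ => (∑ l ∈ Icc 2 (k - 1), a * b / (2 * (l : ℂ) + 1))
      / (2 * (k : ℂ) + 1)) atTop (𝓝 0) :=
    tendsto_sum_div_two_mul_add_one_nhds_zero (tendsto_div_two_mul_add_one_nhds_zero (a * b))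
      fun k l hl => mem_range.2 (by grind)
  have hpoly : Tendsto (fun k => T / 2 * (1 + e k - 2 * e k ^ 2) - b * A₂ * e k
      + b * A₃ * e k ^ 2) atTop (𝓝 (T / 2)) := by
    have hcont : Continuous fun z : ℂ => T / 2 * (1 + z - 2 * z ^ 2) - b * A₂ * z
        + b * A₃ * z ^ 2 := by fun_prop
    simpa [Function.comp_def] using (hcont.tendsto 0).comp he
  have h := hpoly.add hsum
  rw [add_zero] at h
  refine h.congr fun k => ?_
  have hk : 2 * (k : ℂ) + 1 ≠ 0 := by exact_mod_cast (by omega : 2 * k + 1 ≠ 0)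
  simp only [phi, e]
  field_simp
  ring

theorem stmt18_general (T1 : ℝ) (hT1 : 0 < T1) (b : ℂ) (hb : b ≠ 0)
    (aseq : ℕ → ℝ)
    (a A2 A3 : ℂ)
    (hdiv : Tendsto (fun k : ℕ => aseq (2 * k) / (2 * (k : ℝ))) atTop atTop)
    (hphi : ∀ k : ℕ,
      (aseq (2 * k + 1) : ℂ) *
          (2 * b / (T1 : ℂ) + (T1 : ℂ) / 2 * (2 * (k : ℂ) + 3) / (aseq (2 * k) : ℂ))
        = (T1 : ℂ) / 2 * (2 * (k : ℂ) * (2 * (k : ℂ) + 3)) / (2 * (k : ℂ) + 1)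
          - b * A2 + b * A3 / (2 * (k : ℂ) + 1)
          + ∑ l ∈ Finset.Icc 2 (k - 1), a * b / (2 * (l : ℂ) + 1)) :
    Tendsto (fun k : ℕ => (aseq (2 * k + 1) : ℂ) / (2 * (k : ℂ) + 1)) atTop
      (nhds ((T1 : ℂ) ^ 2 / (4 * b))) := by
  have hT1ne : (T1 : ℂ) ≠ 0 := by exact_mod_cast hT1.ne'
  have hcoeff : Tendsto (fun k : ℕ =>
      2 * b / (T1 : ℂ) + (T1 : ℂ) / 2 * (2 * (k : ℂ) + 3) / (aseq (2 * k) : ℂ))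
      atTop (𝓝 (2 * b / T1)) := by
    have h := (tendsto_add_const_div_of_tendsto_div_atTop hdiv 3).ofReal.const_mul (T1 / 2 : ℂ)
    have h' := h.const_add (2 * b / T1)
    rw [Complex.ofReal_zero, mul_zero, add_zero] at h'
    refine h'.congr fun k => ?_
    push_cast
    ring
  have hlimit : (T1 : ℂ) ^ 2 / (4 * b) = (T1 / 2 : ℂ) / (2 * b / T1) := by
    field_simp
    ring
  rw [hlimit]
  have hcoeff_ne : 2 * b / (T1 : ℂ) ≠ 0 := by simp [hb, hT1ne]
  refine ((tendsto_phi_div _ b a A2 A3).div hcoeff hcoeff_ne).congr' ?_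
  filter_upwards [hcoeff.eventually_ne hcoeff_ne] with k hk
  rw [Pi.div_apply, phi, ← hphi k, mul_div_right_comm, mul_div_cancel_right₀ _ hk]

theorem stmt18 (T1 : ℝ) (hT1 : 0 < T1) (b : ℂ) (hb : b ≠ 0)
    (aseq : ℕ → ℝ) (hane : ∀ n : ℕ, aseq n ≠ 0)
    (a A2 A3 : ℂ)
    (hdiv : Tendsto (fun k : ℕ => aseq (2 * k) / (2 * (k : ℝ))) atTop atTop)
    (hphi : ∀ k : ℕ,
      (aseq (2 * k + 1) : ℂ) *
          (2 * b / (T1 : ℂ) + (T1 : ℂ) / 2 * (2 * (k : ℂ) + 3) / (aseq (2 * k) : ℂ))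
        = (T1 : ℂ) / 2 * (2 * (k : ℂ) * (2 * (k : ℂ) + 3)) / (2 * (k : ℂ) + 1)
          - b * A2 + b * A3 / (2 * (k : ℂ) + 1)
          + ∑ l ∈ Finset.Icc 2 (k - 1), a * b / (2 * (l : ℂ) + 1)) :
    Tendsto (fun k : ℕ => (aseq (2 * k + 1) : ℂ) / (2 * (k : ℂ) + 1)) atTop
      (nhds ((T1 : ℂ) ^ 2 / (4 * b))) :=
  stmt18_general T1 hT1 b hb aseq a A2 A3 hdiv hphi
end
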